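/- Let k > 2 be an integer and let ψ(k) be the largest integer m with gcd(m,k) = 1 and m < k/2. If ψ(k) = 1, then the Euler totient φ(k) = 2. -/
import Mathlib


/-- Let `k > 2` and suppose `ψ(k) = 1`, i.e. `1` is the greatest integer `m` with
`gcd(m,k) = 1` and `2*m < k`. Then `φ(k) = 2`. -/
theorem totient_eq_two_of_psi_eq_one (k : ℕ) (hk : 2 < k)
    (h1 : Nat.gcd 1 k = 1 ∧ 2 * 1 < k)
    (hmax : ∀ m : ℕ, Nat.gcd m k = 1 ∧ 2 * m < k → m ≤ 1) :
    Nat.totient k = 2 := by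
  have hk36 : k = 3 ∨ k = 4 ∨ k = 6 := by
    by_contra h
    push_neg at h
    obtain ⟨h3, h4, h6⟩ := h
    rcases Nat.even_or_odd k with he | ho
    · obtain ⟨s, hs⟩ := he
      have hs2 : 2 ≤ s := by omega
      rcases Nat.even_or_odd s with hse | hso
      · -- k = 4t, k ≥ 8, take m = s - 1
        have hs4 : 4 ≤ s := by
          rcases hse with ⟨t, ht⟩; omega
        have hodd : Odd (s - 1) := by
          rcases hse with ⟨t, ht⟩
          exact ⟨t - 1, by omega⟩
        have hc : Nat.Coprime (s - 1) k := by
          have h2 : Nat.Coprime (s - 1) 2 := Nat.coprime_two_right.mpr hodd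
          have hss : Nat.Coprime (s - 1) s := by
            have h' := (Nat.coprime_add_mul_left_right (s - 1) 1 1).mpr (Nat.coprime_one_right (s - 1))
            rwa [show 1 + (s - 1) * 1 = s by omega] at h'
          have : Nat.Coprime (s - 1) (2 * s) := Nat.Coprime.mul_right h2 hss
          rwa [show k = 2 * s by omega]
        have := hmax (s - 1) ⟨hc, by omega⟩
        omega
      · -- k = 2s, s odd, s ≥ 5, take m = s - 2
        have hs5 : 5 ≤ s := by
          rcases hso with ⟨t, ht⟩; omega
        have hodd : Odd (s - 2) := by
          rcases hso with ⟨t, ht⟩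
          exact ⟨t - 1, by omega⟩
        have hc : Nat.Coprime (s - 2) k := by
          have h2 : Nat.Coprime (s - 2) 2 := Nat.coprime_two_right.mpr hodd
          have hss : Nat.Coprime (s - 2) s := by
            have h' := (Nat.coprime_add_mul_left_right (s - 2) 2 1).mpr h2
            rwa [show 2 + (s - 2) * 1 = s by omega] at h'
          have : Nat.Coprime (s - 2) (2 * s) := Nat.Coprime.mul_right h2 hss
          rwa [show k = 2 * s by omega]
        have := hmax (s - 2) ⟨hc, by omega⟩
        omega
    · -- k odd, k ≥ 5, take m = 2
      have hk5 : 5 ≤ k := by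
        rcases ho with ⟨t, ht⟩; omega
      have hc : Nat.gcd 2 k = 1 := Nat.coprime_two_left.mpr ho
      have := hmax 2 ⟨hc, by omega⟩
      omega
  rcases hk36 with rfl | rfl | rfl <;> decide
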